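/- arXiv:1703.08203 — 3 statements merged into one kernel-verified Lean document; each statement's English description precedes it below -/
import Mathlib

section
/- Let R be a ring that is linearly topologized, Hausdorff and complete, and let 𝔪 be a closed ideal of R such that every element of 𝔪 is topologically nilpotent. Let f = (f₁,…,fₙ) be an n-tuple of restricted power series in R⟨X₁,…,Xₙ⟩ with Jacobian determinant J. If f(0) ∈ 𝔪ⁿ and J(0) is a unit of R, then the map x ↦ f(x) is a bijection of 𝔪ⁿ onto itself. -/
/-!
Modulo an open ideal `I`, a restricted power series is a polynomial over `R ⧸ I`, and the
elements of `𝔪` become nilpotent. Over any commutative ring, a first-order Taylor estimate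
`g x - g x' ≡ J(0) (x - x')` modulo `𝔞 · (x - x')`, for `x, x'` with entries in an ideal `𝔞`,
gives two facts: if `𝔞` lies in the Jacobson radical, `g` is injective on `𝔞ⁿ` (Nakayama); and
Newton's iteration `x ↦ x + J(0)⁻¹ (y - g x)` from `0` leaves an error in `𝔟 ^ (k + 1)` after
`k` steps, where `𝔟` is generated by `y` and `g 0`, so it solves `g x = y` once `𝔟` is
nilpotent. Since `R` is Hausdorff, injectivity modulo every open ideal gives injectivity. Run
in `R` itself, Newton's iteration has increments that eventually vanish modulo every open
ideal, so by completeness it converges; by continuity of evaluation its limit solves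
`f x = y`, and it lies in `𝔪ⁿ` because `𝔪` is closed.
-/

open Filter

/-- Evaluation of a (restricted) multivariate power series at a point, as the sum of
its monomials' values. -/
noncomputable def evalRestricted {R : Type*} [CommRing R] [UniformSpace R]
    {n : ℕ} (φ : MvPowerSeries (Fin n) R) (a : Fin n → R) : R :=
  ∑' d : Fin n →₀ ℕ, MvPowerSeries.coeff d φ * ∏ i, a i ^ d i

open Matrix

theorem Matrix.mulVec_mem_ideal {ι κ S : Type*} [CommRing S] [Fintype κ] {J : Ideal S}
    (M : Matrix ι κ S) {v : κ → S} (hv : ∀ j, v j ∈ J) (i : ι) : (M *ᵥ v) i ∈ J :=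
  Ideal.sum_mem _ fun j _ => Ideal.mul_mem_left _ _ (hv j)

-- Newton's method with the derivative frozen at a single point, `B` being its inverse there.
noncomputable def newtonMap {σ S : Type*} [CommRing S] [Fintype σ] (F : (σ → S) → σ → S)
    (B : Matrix σ σ S) (y x : σ → S) : σ → S :=
  x + B *ᵥ (y - F x)

theorem newtonMap_semiconj {σ S T : Type*} [CommRing S] [CommRing T] [Fintype σ]
    (π : S →+* T) {F : (σ → S) → σ → S} {G : (σ → T) → σ → T} (hFG : ∀ x, G (π ∘ x) = π ∘ F x)
    (B : Matrix σ σ S) (y : σ → S) :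
    Function.Semiconj (π ∘ ·) (newtonMap F B y) (newtonMap G (B.map π) (π ∘ y)) := by
  intro x
  ext i
  simp [newtonMap, RingHom.map_mulVec, hFG]

theorem exists_tendsto_newtonMap_iterate {R σ : Type*} [CommRing R] [UniformSpace R]
    [IsUniformAddGroup R] [IsTopologicalRing R] [NonarchimedeanAddGroup R] [CompleteSpace R]
    [Fintype σ] (F : (σ → R) → σ → R) (B : Matrix σ σ R) {y x₀ : σ → R}
    (h : ∀ i, Tendsto (fun k => F ((newtonMap F B y)^[k] x₀) i) atTop (nhds (y i))) :
    ∃ x, Tendsto (fun k => (newtonMap F B y)^[k] x₀) atTop (nhds x) := by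
  have hdefect : Tendsto (fun k => y - F ((newtonMap F B y)^[k] x₀)) atTop (nhds 0) :=
    tendsto_pi_nhds.2 fun i => by simpa using (h i).const_sub (y i)
  have hstep : Tendsto (fun k => B *ᵥ (y - F ((newtonMap F B y)^[k] x₀))) atTop (nhds 0) := by
    simpa [Function.comp_def] using
      ((continuous_const.matrix_mulVec continuous_id).tendsto 0).comp hdefect
  have hcauchy : ∀ i, CauchySeq fun k => (newtonMap F B y)^[k] x₀ i := fun i =>
    NonarchimedeanAddGroup.cauchySeq_of_tendsto_sub_nhds_zero <| by
      simpa [Function.comp_def, Function.iterate_succ_apply', newtonMap] using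
        (continuous_apply i).tendsto 0 |>.comp hstep
  choose x hx using fun i => cauchySeq_tendsto_of_complete (hcauchy i)
  exact ⟨x, tendsto_pi_nhds.2 hx⟩

namespace MvPolynomial

variable {σ S : Type*} [CommRing S]

theorem eval_sub_eval_mem (p : MvPolynomial σ S) {J : Ideal S} {x x' : σ → S}
    (h : ∀ i, x i - x' i ∈ J) : eval x p - eval x' p ∈ J := by
  rw [← Ideal.Quotient.eq, eval₂_comp, eval₂_comp]
  congr 1
  ext i
  exact Ideal.Quotient.eq.2 (h i)

variable [Fintype σ] [DecidableEq σ]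

theorem eval_sub_eval_sub_sum_mem_mul (p : MvPolynomial σ S) {𝔞 D : Ideal S} {x x' : σ → S}
    (hx : ∀ i, x i ∈ 𝔞) (hx' : ∀ i, x' i ∈ 𝔞) (hD : ∀ i, x i - x' i ∈ D) :
    eval x p - eval x' p - ∑ j, coeff (Finsupp.single j 1) p * (x j - x' j) ∈ 𝔞 * D := by
  induction p using MvPolynomial.induction_on with
  | C a => simp [coeff_C, eq_comm (a := (0 : σ →₀ ℕ))]
  | add p q hp hq =>
    convert add_mem hp hq using 1
    simp only [map_add, coeff_add, add_mul, Finset.sum_add_distrib]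
    ring
  | mul_X p i _ =>
    have hlin : ∑ j, coeff (Finsupp.single j 1) (p * X i) * (x j - x' j)
        = coeff 0 p * (x i - x' i) := by
      simp [coeff_mul_X']
    have h0 : eval x' p - coeff 0 p ∈ 𝔞 := by
      simpa [← constantCoeff_eq] using eval_sub_eval_mem p (x := x') (x' := 0) (by simpa using hx')
    -- the remainder is `x i (p(x) - p(x')) + (p(x') - p(0)) (x i - x' i)`
    rw [hlin, eval_mul, eval_mul, eval_X, eval_X]
    convert add_mem (Ideal.mul_mem_mul (hx i) (eval_sub_eval_mem p hD))
      (Ideal.mul_mem_mul h0 (hD i)) using 1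
    ring

noncomputable def jacobianAtZero (g : σ → MvPolynomial σ S) : Matrix σ σ S :=
  Matrix.of fun i j => coeff (Finsupp.single j 1) (g i)

theorem jacobianAtZero_mulVec_sub_mem_mul (g : σ → MvPolynomial σ S) {𝔞 D : Ideal S}
    {x x' : σ → S} (hx : ∀ i, x i ∈ 𝔞) (hx' : ∀ i, x' i ∈ 𝔞) (hD : ∀ i, x i - x' i ∈ D)
    (i : σ) : eval x (g i) - eval x' (g i) - (jacobianAtZero g *ᵥ (x - x')) i ∈ 𝔞 * D :=
  eval_sub_eval_sub_sum_mem_mul (g i) hx hx' hD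

theorem eq_of_eval_eq_of_le_jacobson (g : σ → MvPolynomial σ S) (hg : IsUnit (jacobianAtZero g).det)
    {𝔞 : Ideal S} (h𝔞 : 𝔞 ≤ Ideal.jacobson ⊥) {x x' : σ → S} (hx : ∀ i, x i ∈ 𝔞)
    (hx' : ∀ i, x' i ∈ 𝔞) (h : ∀ i, eval x (g i) = eval x' (g i)) : x = x' := by
  set D := Ideal.span (Set.range (x - x'))
  have hD : ∀ i, (x - x') i ∈ D := fun i => Ideal.subset_span ⟨i, rfl⟩
  -- `g x = g x'` leaves only the Taylor remainder, so the linear part lies in `𝔞 * D`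
  have hlin : ∀ i, (jacobianAtZero g *ᵥ (x - x')) i ∈ 𝔞 * D := fun i => by
    simpa [h i] using jacobianAtZero_mulVec_sub_mem_mul g hx hx' hD i
  have hle : D ≤ 𝔞 • D := by
    refine Ideal.span_le.2 ?_
    rintro _ ⟨i, rfl⟩
    have := Matrix.mulVec_mem_ideal (jacobianAtZero g)⁻¹ hlin i
    rwa [Matrix.mulVec_mulVec, Matrix.nonsing_inv_mul _ hg, Matrix.one_mulVec] at this
  have hD0 := Submodule.eq_bot_of_le_smul_of_le_jacobson_bot 𝔞 D
    (Submodule.fg_span (Set.finite_range _)) hle h𝔞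
  ext i
  simpa [hD0, sub_eq_zero] using hD i

theorem newtonMap_mem_and_sub_eval_mem_pow {g : σ → MvPolynomial σ S} {B : Matrix σ σ S}
    (hB : jacobianAtZero g * B = 1) {𝔟 : Ideal S} {y x : σ → S} {k : ℕ} (hx : ∀ i, x i ∈ 𝔟)
    (hk : ∀ i, y i - eval x (g i) ∈ 𝔟 ^ (k + 1)) :
    (∀ i, newtonMap (fun z i => eval z (g i)) B y x i ∈ 𝔟) ∧
      ∀ i, y i - eval (newtonMap (fun z i => eval z (g i)) B y x) (g i) ∈ 𝔟 ^ (k + 2) := by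
  set x' := newtonMap (fun z i => eval z (g i)) B y x
  have hstep : ∀ i, (x' - x) i ∈ 𝔟 ^ (k + 1) := by
    simpa [x', newtonMap] using Matrix.mulVec_mem_ideal B (v := y - fun i => eval x (g i)) hk
  have hx' : ∀ i, x' i ∈ 𝔟 := fun i => by
    simpa using add_mem (hx i) (Ideal.pow_le_self (Nat.succ_ne_zero k) (hstep i))
  refine ⟨hx', fun i => ?_⟩
  have hrem := jacobianAtZero_mulVec_sub_mem_mul g hx' hx hstep i
  rw [← pow_succ'] at hrem
  have hlin : jacobianAtZero g *ᵥ (x' - x) = y - fun i => eval x (g i) := by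
    simp [x', newtonMap, Matrix.mulVec_mulVec, hB]
  convert neg_mem hrem using 1
  rw [hlin]
  simp only [Pi.sub_apply]
  ring

theorem eventually_eval_newtonMap_iterate_eq {g : σ → MvPolynomial σ S} {B : Matrix σ σ S}
    (hB : jacobianAtZero g * B = 1) {𝔟 : Ideal S} (h𝔟 : IsNilpotent 𝔟) {y : σ → S}
    (hy : ∀ i, y i ∈ 𝔟) (hg : ∀ i, coeff 0 (g i) ∈ 𝔟) :
    ∀ᶠ k in atTop, ∀ i, eval ((newtonMap (fun z i => eval z (g i)) B y)^[k] 0) (g i) = y i := by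
  have hiter : ∀ k, (∀ i, (newtonMap (fun z i => eval z (g i)) B y)^[k] 0 i ∈ 𝔟) ∧
      ∀ i, y i - eval ((newtonMap (fun z i => eval z (g i)) B y)^[k] 0) (g i) ∈ 𝔟 ^ (k + 1) := by
    intro k
    induction k with
    | zero =>
      refine ⟨fun i => zero_mem _, fun i => ?_⟩
      simpa [← constantCoeff_eq] using sub_mem (hy i) (hg i)
    | succ k ih =>
      rw [Function.iterate_succ_apply']
      exact newtonMap_mem_and_sub_eval_mem_pow hB ih.1 ih.2
  obtain ⟨N, hN⟩ := h𝔟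
  filter_upwards [eventually_ge_atTop N] with k hk i
  have := Ideal.pow_le_pow_right (by omega : N ≤ k + 1) ((hiter k).2 i)
  rw [hN, Ideal.zero_eq_bot, Ideal.mem_bot, sub_eq_zero] at this
  exact this.symm

end MvPolynomial

section LinearTopology

variable {R : Type*} [CommRing R] [TopologicalSpace R] [IsTopologicalRing R]
  [IsLinearTopology R R]

instance IsLinearTopology.nonarchimedeanAddGroup : NonarchimedeanAddGroup R where
  is_nonarchimedean U hU := by
    obtain ⟨I, hI, hIU⟩ := IsLinearTopology.hasBasis_ideal.mem_iff.1 hU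
    exact ⟨⟨I.toAddSubgroup, AddSubgroup.isOpen_of_mem_nhds _ hI⟩, hIU⟩

theorem eq_of_forall_isOpen_ideal_sub_mem [T1Space R] {a b : R}
    (h : ∀ I : Ideal R, IsOpen (I : Set R) → a - b ∈ I) : a = b := by
  by_contra hab
  obtain ⟨I, hI, hIsub⟩ := IsLinearTopology.hasBasis_open_ideal.mem_iff.1
    (isOpen_compl_singleton.mem_nhds (Ne.symm (sub_ne_zero.2 hab)) : {a - b}ᶜ ∈ nhds (0 : R))
  exact hIsub (h I hI) rfl

end LinearTopology

section Quotient

variable {R : Type*} [CommRing R] [TopologicalSpace R] {I : Ideal R}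

theorem IsTopologicallyNilpotent.isNilpotent_mk {a : R} (ha : IsTopologicallyNilpotent a)
    (hI : IsOpen (I : Set R)) : IsNilpotent (Ideal.Quotient.mk I a) := by
  obtain ⟨k, hk⟩ := ha.exists_pow_mem_of_mem_nhds (hI.mem_nhds I.zero_mem)
  exact ⟨k, by rwa [← map_pow, Ideal.Quotient.eq_zero_iff_mem]⟩

theorem Ideal.map_mk_le_nilradical {J : Ideal R} (hJ : ∀ a ∈ J, IsTopologicallyNilpotent a)
    (hI : IsOpen (I : Set R)) : J.map (Ideal.Quotient.mk I) ≤ nilradical (R ⧸ I) :=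
  Ideal.map_le_iff_le_comap.2 fun a ha => (hJ a ha).isNilpotent_mk hI

theorem Ideal.FG.isNilpotent_map_mk {J : Ideal R} (hJfg : J.FG)
    (hJ : ∀ a ∈ J, IsTopologicallyNilpotent a) (hI : IsOpen (I : Set R)) :
    IsNilpotent (J.map (Ideal.Quotient.mk I)) :=
  (hJfg.map _).isNilpotent_iff_le_nilradical.2 (Ideal.map_mk_le_nilradical hJ hI)

end Quotient

section Restricted

theorem evalRestricted_mem {R : Type*} [CommRing R] [UniformSpace R] {n : ℕ}
    {φ : MvPowerSeries (Fin n) R} {m : Ideal R} (hm : IsClosed (m : Set R))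
    (h0 : MvPowerSeries.constantCoeff φ ∈ m) {x : Fin n → R} (hx : ∀ i, x i ∈ m) :
    evalRestricted φ x ∈ m := by
  refine tsum_mem hm fun d => ?_
  rcases eq_or_ne d 0 with rfl | hd
  · simpa using h0
  · obtain ⟨j, hj⟩ := Finsupp.ne_iff.1 hd
    exact m.mul_mem_left _ <| Ideal.prod_mem m (Finset.mem_univ j)
      (Ideal.pow_mem_of_mem m (hx j) _ (Nat.pos_of_ne_zero hj))

variable {R : Type*} [CommRing R] [UniformSpace R] [IsUniformAddGroup R] [IsTopologicalRing R]
  [IsLinearTopology R R] [CompleteSpace R] {n : ℕ} {φ : MvPowerSeries (Fin n) R}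
  (hφ : Tendsto (fun d => MvPowerSeries.coeff d φ) cofinite (nhds 0))
include hφ

theorem summable_coeff_mul_prod_pow (x : Fin n → R) :
    Summable fun d : Fin n →₀ ℕ => MvPowerSeries.coeff d φ * ∏ i, x i ^ d i :=
  NonarchimedeanAddGroup.summable_of_tendsto_cofinite_zero
    (IsLinearTopology.tendsto_mul_zero_of_left _ _ hφ)

variable [T2Space R]

theorem evalRestricted_sub_sum_mem (x : Fin n → R) {I : Ideal R} (hI : IsClosed (I : Set R))
    (s : Finset (Fin n →₀ ℕ)) (hs : ∀ d ∉ s, MvPowerSeries.coeff d φ ∈ I) :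
    evalRestricted φ x - ∑ d ∈ s, MvPowerSeries.coeff d φ * ∏ i, x i ^ d i ∈ I := by
  rw [evalRestricted, ← (summable_coeff_mul_prod_pow hφ x).sum_add_tsum_compl (s := s),
    add_sub_cancel_left]
  exact tsum_mem hI fun d => I.mul_mem_right _ (hs d d.2)

theorem exists_mvPolynomial_mk_evalRestricted {I : Ideal R} (hI : IsOpen (I : Set R)) :
    ∃ g : MvPolynomial (Fin n) (R ⧸ I),
      (∀ d, g.coeff d = Ideal.Quotient.mk I (MvPowerSeries.coeff d φ)) ∧
      ∀ x, Ideal.Quotient.mk I (evalRestricted φ x) = g.eval (Ideal.Quotient.mk I ∘ x) := by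
  have hfin : {d | MvPowerSeries.coeff d φ ∉ I}.Finite := hφ (hI.mem_nhds I.zero_mem)
  let g : MvPolynomial (Fin n) (R ⧸ I) :=
    .ofCoeff <| Finsupp.ofSupportFinite (fun d => Ideal.Quotient.mk I (MvPowerSeries.coeff d φ))
      (hfin.subset fun d hd => mt Ideal.Quotient.eq_zero_iff_mem.2 hd)
  have hg : ∀ d, g.coeff d = Ideal.Quotient.mk I (MvPowerSeries.coeff d φ) := fun _ => rfl
  refine ⟨g, hg, fun x => ?_⟩
  have hsum := evalRestricted_sub_sum_mem hφ x (I.toAddSubgroup.isClosed_of_isOpen hI)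
    g.support fun d hd => by
      rwa [MvPolynomial.notMem_support_iff, hg, Ideal.Quotient.eq_zero_iff_mem] at hd
  rw [Ideal.Quotient.eq.2 hsum, MvPolynomial.eval_eq']
  simp [hg]

theorem continuous_evalRestricted : Continuous (evalRestricted φ) := by
  refine continuous_iff_continuousAt.2 fun x => ?_
  rw [ContinuousAt, ← tendsto_sub_nhds_zero_iff,
    IsLinearTopology.hasBasis_open_ideal.tendsto_right_iff]
  intro I hI
  obtain ⟨g, -, hg⟩ := exists_mvPolynomial_mk_evalRestricted hφ hI
  have hnear : ∀ i, ∀ᶠ x' in nhds x, x' i - x i ∈ I := fun i =>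
    ((continuous_apply i).sub continuous_const).tendsto' x 0 (sub_self _) (hI.mem_nhds I.zero_mem)
  filter_upwards [eventually_all.2 hnear] with x' hx'
  rw [SetLike.mem_coe, ← Ideal.Quotient.eq, hg, hg]
  congr 2
  funext i
  exact Ideal.Quotient.eq.2 (hx' i)

end Restricted

noncomputable def MvPowerSeries.jacobianAtZero {σ R : Type*} [Semiring R]
    (f : σ → MvPowerSeries σ R) : Matrix σ σ R :=
  Matrix.of fun i j => MvPowerSeries.coeff (Finsupp.single j 1) (f i)

section Hensel

variable {R : Type*} [CommRing R] [UniformSpace R] [IsUniformAddGroup R] [IsTopologicalRing R]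
  [IsLinearTopology R R] [T2Space R] [CompleteSpace R] {n : ℕ}
  {f : Fin n → MvPowerSeries (Fin n) R}
  (hf : ∀ i, Tendsto (fun d => MvPowerSeries.coeff d (f i)) cofinite (nhds 0))
include hf

theorem exists_mvPolynomial_tuple_mk_evalRestricted {I : Ideal R} (hI : IsOpen (I : Set R)) :
    ∃ g : Fin n → MvPolynomial (Fin n) (R ⧸ I),
      MvPolynomial.jacobianAtZero g = (MvPowerSeries.jacobianAtZero f).map (Ideal.Quotient.mk I) ∧
      (∀ i, (g i).coeff 0 = Ideal.Quotient.mk I (MvPowerSeries.constantCoeff (f i))) ∧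
      ∀ x i, Ideal.Quotient.mk I (evalRestricted (f i) x) =
        (g i).eval (Ideal.Quotient.mk I ∘ x) := by
  choose g hcoeff heval using fun i => exists_mvPolynomial_mk_evalRestricted (hf i) hI
  refine ⟨g, ?_, fun i => ?_, fun x i => heval i x⟩
  · ext i j
    exact hcoeff i _
  · rw [hcoeff, MvPowerSeries.coeff_zero_eq_constantCoeff_apply]

variable {m : Ideal R} (hm : ∀ a ∈ m, IsTopologicallyNilpotent a)
include hm

theorem evalRestricted_injOn (hJ : IsUnit (MvPowerSeries.jacobianAtZero f).det) :
    Set.InjOn (fun x i => evalRestricted (f i) x) {x : Fin n → R | ∀ i, x i ∈ m} := by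
  intro x hx x' hx' h
  funext i
  refine eq_of_forall_isOpen_ideal_sub_mem fun I hI => ?_
  obtain ⟨g, hjac, -, hg⟩ := exists_mvPolynomial_tuple_mk_evalRestricted hf hI
  have hdet : IsUnit (MvPolynomial.jacobianAtZero g).det := by
    rw [hjac, ← RingHom.mapMatrix_apply, ← RingHom.map_det]
    exact hJ.map _
  have h𝔞 : m.map (Ideal.Quotient.mk I) ≤ Ideal.jacobson ⊥ :=
    (Ideal.map_mk_le_nilradical hm hI).trans
      ((nilradical_le_jacobson _).trans Ideal.jacobson_bot.ge)
  have hmod := MvPolynomial.eq_of_eval_eq_of_le_jacobson g hdet h𝔞 (x := Ideal.Quotient.mk I ∘ x)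
    (x' := Ideal.Quotient.mk I ∘ x') (fun j => Ideal.mem_map_of_mem _ (hx j))
    (fun j => Ideal.mem_map_of_mem _ (hx' j))
    (fun j => by rw [← hg, ← hg]; exact congrArg _ (congrFun h j))
  exact Ideal.Quotient.eq.1 (congrFun hmod i)

variable (hf0 : ∀ i, MvPowerSeries.constantCoeff (f i) ∈ m)
include hf0

theorem tendsto_evalRestricted_newtonMap_iterate {B : Matrix (Fin n) (Fin n) R}
    (hB : MvPowerSeries.jacobianAtZero f * B = 1) {y : Fin n → R} (hy : ∀ i, y i ∈ m)
    (i : Fin n) :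
    Tendsto (fun k => evalRestricted (f i)
      ((newtonMap (fun x j => evalRestricted (f j) x) B y)^[k] 0)) atTop (nhds (y i)) := by
  rw [← tendsto_sub_nhds_zero_iff, IsLinearTopology.hasBasis_open_ideal.tendsto_right_iff]
  intro I hI
  obtain ⟨g, hjac, hg0, hg⟩ := exists_mvPolynomial_tuple_mk_evalRestricted hf hI
  set π := Ideal.Quotient.mk I
  set J := Ideal.span (Set.range y ∪ Set.range fun j => MvPowerSeries.constantCoeff (f j))
  have hJm : J ≤ m := Ideal.span_le.2 <| by
    rintro _ (⟨j, rfl⟩ | ⟨j, rfl⟩)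
    exacts [hy j, hf0 j]
  have hJnil : IsNilpotent (J.map π) :=
    Ideal.FG.isNilpotent_map_mk (Submodule.fg_span ((Set.finite_range _).union
      (Set.finite_range _))) (fun a ha => hm a (hJm ha)) hI
  have hB' : MvPolynomial.jacobianAtZero g * B.map π = 1 := by
    rw [hjac, ← Matrix.map_mul, hB, Matrix.map_one _ (map_zero π) (map_one π)]
  have hsemi : ∀ k, π ∘ (newtonMap (fun x j => evalRestricted (f j) x) B y)^[k] 0 =
      (newtonMap (fun z j => (g j).eval z) (B.map π) (π ∘ y))^[k] 0 := fun k => by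
    have := (newtonMap_semiconj π (F := fun x j => evalRestricted (f j) x)
      (G := fun z j => (g j).eval z) (fun x => funext fun j => (hg x j).symm) B y).iterate_right k 0
    simpa using this
  filter_upwards [MvPolynomial.eventually_eval_newtonMap_iterate_eq hB' hJnil (y := π ∘ y)
    (fun j => Ideal.mem_map_of_mem π (Ideal.subset_span (Or.inl ⟨j, rfl⟩)))
    (fun j => hg0 j ▸ Ideal.mem_map_of_mem π (Ideal.subset_span (Or.inr ⟨j, rfl⟩)))] with k hk
  rw [SetLike.mem_coe, ← Ideal.Quotient.eq, hg, hsemi k, hk i, Function.comp_apply]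

theorem evalRestricted_surjOn (hmclosed : IsClosed (m : Set R))
    (hJ : IsUnit (MvPowerSeries.jacobianAtZero f).det) :
    Set.SurjOn (fun x i => evalRestricted (f i) x) {x : Fin n → R | ∀ i, x i ∈ m}
      {x : Fin n → R | ∀ i, x i ∈ m} := by
  intro y hy
  set F := fun x j => evalRestricted (f j) x
  set B := (MvPowerSeries.jacobianAtZero f)⁻¹
  have hconv := tendsto_evalRestricted_newtonMap_iterate hf hm hf0
    (Matrix.mul_nonsing_inv _ hJ) hy
  obtain ⟨x, hx⟩ := exists_tendsto_newtonMap_iterate F B hconv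
  have hmaps : Set.MapsTo (newtonMap F B y) {x | ∀ i, x i ∈ m} {x | ∀ i, x i ∈ m} :=
    fun z hz i => add_mem (hz i) (Matrix.mulVec_mem_ideal B
      (fun j => sub_mem (hy j) (evalRestricted_mem hmclosed (hf0 j) hz)) i)
  refine ⟨x, fun i => hmclosed.mem_of_tendsto ((continuous_apply i).tendsto x |>.comp hx)
    (Eventually.of_forall fun k => hmaps.iterate k (fun _ => zero_mem m) i), ?_⟩
  funext i
  exact tendsto_nhds_unique ((continuous_evalRestricted (hf i)).tendsto x |>.comp hx) (hconv i)

end Hensel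

/-- If `R` is linearly topologized, Hausdorff and complete, `𝔪` is a closed ideal whose
elements are topologically nilpotent, and `f` is an `n`-tuple of restricted power series
with `f(0) ∈ 𝔪ⁿ` and Jacobian determinant at `0` a unit, then `x ↦ f(x)` is a bijection
of `𝔪ⁿ` onto itself. -/
theorem restricted_power_series_bijOn
    {R : Type*} [CommRing R] [UniformSpace R] [IsUniformAddGroup R]
    [IsTopologicalRing R] [T2Space R] [CompleteSpace R]
    (hlin : ∀ U ∈ nhds (0 : R), ∃ I : Ideal R, (I : Set R) ∈ nhds (0 : R) ∧ (I : Set R) ⊆ U)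
    (m : Ideal R) (hmclosed : IsClosed (m : Set R))
    (hmnil : ∀ x ∈ m, Tendsto (fun k : ℕ => x ^ k) atTop (nhds (0 : R)))
    {n : ℕ} (f : Fin n → MvPowerSeries (Fin n) R)
    (hres : ∀ i, Tendsto (fun d : Fin n →₀ ℕ => MvPowerSeries.coeff d (f i))
      cofinite (nhds (0 : R)))
    (hf0 : ∀ i, MvPowerSeries.constantCoeff (f i) ∈ m)
    (hJ : IsUnit (Matrix.det fun i j : Fin n =>
      MvPowerSeries.coeff (Finsupp.single j 1) (f i))) :
    Set.BijOn (fun x (i : Fin n) => evalRestricted (f i) x)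
      {x : Fin n → R | ∀ i, x i ∈ m} {x : Fin n → R | ∀ i, x i ∈ m} := by
  have : IsLinearTopology R R := isLinearTopology_iff_hasBasis_ideal.2
    ⟨fun U => ⟨hlin U, fun ⟨_, hI, hIU⟩ => mem_of_superset hI hIU⟩⟩
  exact ⟨fun x hx i => evalRestricted_mem hmclosed (hf0 i) hx,
    evalRestricted_injOn hres hmnil hJ, evalRestricted_surjOn hres hmnil hf0 hmclosed hJ⟩
end

section
/- The ring K[[X₁,…,Xₙ]]_alg of formal power series algebraic over K[X₁,…,Xₙ] is a Henselian local ring, and it is closed under power substitutions Xᵢ ↦ Xᵢ^{rᵢ} and under division by a coordinate (i.e. if φ ∈ K[[X]]_alg and Xᵢ divides φ in K[[X]], then φ/Xᵢ ∈ K[[X]]_alg). -/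
open scoped Classical

/-- A multivariate power series is algebraic if it satisfies a nonzero polynomial
relation over `K[X₁,…,Xₙ]`. -/
def IsAlgebraicMvPowerSeries {K : Type*} [CommRing K] {n : ℕ}
    (φ : MvPowerSeries (Fin n) K) : Prop :=
  ∃ q : Polynomial (MvPolynomial (Fin n) K), q ≠ 0 ∧
    Polynomial.eval₂ MvPolynomial.coeToMvPowerSeries.ringHom φ q = 0

/-- The power substitution `Xᵢ ↦ Xᵢ^{rᵢ}` in a multivariate power series. -/
noncomputable def mvPowSubst {K : Type*} [CommRing K] {n : ℕ} (r : Fin n → ℕ)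
    (φ : MvPowerSeries (Fin n) K) : MvPowerSeries (Fin n) K :=
  fun d : Fin n →₀ ℕ =>
    if ∀ i, r i ∣ d i then
      MvPowerSeries.coeff (Finsupp.equivFunOnFinite.symm fun i => d i / r i) φ
    else 0

/-!
Put `R = K[X₁,…,Xₙ]` and `S = K[[X₁,…,Xₙ]]`; the algebraic power series form the subalgebra
`algebraicClosure R S`. The ring `S` is complete for the adic topology of `(X₁,…,Xₙ)`, which is its
maximal ideal, so `S` is Henselian. A subring `A` of a Henselian local ring `S` is again Henselian
as soon as `A → S` reflects units and `A` is integrally closed in `S`: a root given by Hensel's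
lemma in `S` is integral over `A`. Both hold for the algebraic closure of `R` in the domain `S`,
since inverses of algebraic elements and elements integral over algebraic ones are algebraic.
The substitution `Xᵢ ↦ Xᵢ^{rᵢ}` is an injective ring endomorphism of `S` mapping `R` into `R`,
hence preserves algebraicity, and `Xᵢ ψ` algebraic forces `ψ` algebraic as `Xᵢ ∈ R` is regular.
-/

open Polynomial IsLocalRing in
theorem HenselianLocalRing.of_isIntegrallyClosedIn {R S : Type*} [CommRing R] [CommRing S]
    [Algebra R S] [HenselianLocalRing S] [IsLocalHom (algebraMap R S)]
    [IsIntegrallyClosedIn R S] : HenselianLocalRing R := by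
  have := (algebraMap R S).domain_isLocalRing
  refine ⟨fun f hf a₀ h₁ h₂ => ?_⟩
  have hm := maximalIdeal_comap (algebraMap R S)
  obtain ⟨b, hb, hba₀⟩ := HenselianLocalRing.is_henselian (f.map (algebraMap R S))
    (hf.map _) (algebraMap R S a₀)
    (by rwa [eval_map_algebraMap, aeval_algebraMap_apply, ← Ideal.mem_comap, hm])
    (by rw [derivative_map, eval_map_algebraMap, aeval_algebraMap_apply]; exact h₂.map _)
  rw [IsRoot.def, eval_map] at hb
  obtain ⟨a, rfl⟩ := IsIntegralClosure.isIntegral_iff (A := R) (x := b) |>.mp ⟨f, hf, hb⟩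
  refine ⟨a, IsIntegralClosure.algebraMap_injective R R S ?_, ?_⟩
  · rwa [map_zero, ← eval₂_at_apply]
  · rwa [← hm, Ideal.mem_comap, map_sub]

namespace Subalgebra

variable (R S : Type*) [CommRing R] [IsDomain R] [CommRing S] [Algebra R S]

instance isLocalHom_algebraMap_algebraicClosure :
    IsLocalHom (algebraMap (algebraicClosure R S) S) where
  map_nonunit a ha := by
    let : Invertible (a : S) := ha.invertible
    exact .of_mul_eq_one ⟨⅟(a : S), a.2.invOf⟩ (Subtype.ext (mul_invOf_self (a : S)))

instance isIntegrallyClosedIn_algebraicClosure [NoZeroDivisors S] :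
    IsIntegrallyClosedIn (algebraicClosure R S) S :=
  Subring.isIntegrallyClosedIn_iff.mpr fun _ hx => hx.trans_isAlgebraic R

instance henselianLocalRing_algebraicClosure [NoZeroDivisors S] [HenselianLocalRing S] :
    HenselianLocalRing (algebraicClosure R S) :=
  .of_isIntegrallyClosedIn (S := S)

end Subalgebra

namespace MvPowerSeries

open IsLocalRing

theorem ker_constantCoeff_le_span_range_X {σ R : Type*} [Finite σ] [CommRing R] :
    RingHom.ker (constantCoeff : MvPowerSeries σ R →+* R) ≤ Ideal.span (Set.range X) := by
  intro f hf
  -- Under `MvPowerSeries σ R ≃ AdicCompletion (X) R[X]`, the span of the variables is the kernel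
  -- of the projection to `R[X] ⧸ (X)`, which only sees the constant coefficient.
  set e := toAdicCompletionAlgEquiv σ R
  have hmap : Ideal.map e.toRingEquiv (Ideal.span (Set.range X)) =
      (MvPolynomial.idealOfVars σ R).map (algebraMap _ _) := by
    simp_rw [Ideal.map_span, ← Set.range_comp]
    congr 2; ext1
    simp [e, AdicCompletion.algebraMap_apply, ← MvPolynomial.coe_X, toAdicCompletion_coe]
  have : e f ∈ Ideal.map e.toRingEquiv (Ideal.span (Set.range X)) := by
    rw [hmap, ← AdicCompletion.ker_evalOneₐ_eq_map _ (MvPolynomial.idealOfVars_fg σ R),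
      RingHom.mem_ker, AlgHom.toRingHom_eq_coe, AlgHom.coe_toRingHom,
      ← AdicCompletion.factorₐ_evalₐ_one]
    change Ideal.Quotient.factor _ (Ideal.Quotient.mk _ (truncTotal 1 f)) = 0
    rw [Ideal.Quotient.factor_mk, Ideal.Quotient.eq_zero_iff_mem,
      ← pow_one (MvPolynomial.idealOfVars σ R), MvPolynomial.mem_pow_idealOfVars_iff']
    intro x hx
    rw [coeff_truncTotal _ hx, (Finsupp.degree_eq_zero_iff x).mp (Nat.lt_one_iff.mp hx)]
    exact hf
  rw [Ideal.mem_map_of_equiv] at this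
  obtain ⟨g, hg, hgf⟩ := this
  rwa [e.injective hgf] at hg

theorem maximalIdeal_eq_span_range_X {σ K : Type*} [Finite σ] [Field K] :
    maximalIdeal (MvPowerSeries σ K) = Ideal.span (Set.range X) := by
  have : (RingHom.ker (constantCoeff : MvPowerSeries σ K →+* K)).IsMaximal :=
    RingHom.ker_isMaximal_of_surjective _ fun c => ⟨C c, constantCoeff_C c⟩
  rw [← eq_maximalIdeal this]
  refine le_antisymm ker_constantCoeff_le_span_range_X (Ideal.span_le.mpr ?_)
  rintro _ ⟨i, rfl⟩
  exact constantCoeff_X i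

instance henselianLocalRing {σ K : Type*} [Finite σ] [Field K] :
    HenselianLocalRing (MvPowerSeries σ K) where
  is_henselian f hf a₀ h₁ h₂ := by
    rw [maximalIdeal_eq_span_range_X] at h₁ ⊢
    exact HenselianRing.is_henselian f hf a₀ h₁ (h₂.map _)

theorem algebraMap_mvPolynomial {σ R : Type*} [CommRing R] :
    algebraMap (MvPolynomial σ R) (MvPowerSeries σ R) = MvPolynomial.coeToMvPowerSeries.ringHom :=
  RingHom.ext fun p => by rw [algebraMap_apply', Algebra.algebraMap_self, map_id]; rfl

end MvPowerSeries

section PowerSubstitution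

open MvPowerSeries

variable {R : Type*} [CommRing R] {n : ℕ} {r : Fin n → ℕ}

theorem coeff_mvPowSubst_pointwise_mul (hr : ∀ i, 0 < r i) (φ : MvPowerSeries (Fin n) R)
    (d : Fin n →₀ ℕ) :
    coeff (Finsupp.equivFunOnFinite.symm fun i => r i * d i) (mvPowSubst r φ) = coeff d φ := by
  change ite _ _ _ = _
  simp [Nat.mul_div_cancel_left _ (hr _)]

theorem mvPowSubst_injective (hr : ∀ i, 0 < r i) :
    Function.Injective (mvPowSubst r : MvPowerSeries (Fin n) R → MvPowerSeries (Fin n) R) :=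
  fun φ ψ h => ext fun d => by
    rw [← coeff_mvPowSubst_pointwise_mul hr, h, coeff_mvPowSubst_pointwise_mul hr]

theorem hasSubst_X_pow (hr : ∀ i, 0 < r i) :
    HasSubst fun i => (X i : MvPowerSeries (Fin n) R) ^ r i :=
  hasSubst_of_constantCoeff_zero fun i => by simp [(hr i).ne']

theorem mvPowSubst_eq_subst (hr : ∀ i, 0 < r i) (φ : MvPowerSeries (Fin n) R) :
    mvPowSubst r φ = subst (fun i => (X i : MvPowerSeries (Fin n) R) ^ r i) φ := by
  ext e
  have hprod (d : Fin n →₀ ℕ) : (d.prod fun i k => ((X i : MvPowerSeries (Fin n) R) ^ r i) ^ k) =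
      monomial (Finsupp.equivFunOnFinite.symm fun i => r i * d i) 1 := by
    rw [monomial_one_eq, Finsupp.prod_fintype, Finsupp.prod_fintype] <;> simp [pow_mul]
  simp_rw [coeff_subst (hasSubst_X_pow hr), hprod, coeff_monomial]
  by_cases he : ∃ d : Fin n →₀ ℕ, e = Finsupp.equivFunOnFinite.symm fun i => r i * d i
  · obtain ⟨d, rfl⟩ := he
    rw [coeff_mvPowSubst_pointwise_mul hr, finsum_eq_single _ d, if_pos rfl, smul_eq_mul,
      mul_one]
    intro d' hd'
    rw [if_neg fun h => hd' (Finsupp.ext fun i => ?_), smul_zero]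
    exact Nat.eq_of_mul_eq_mul_left (hr i)
      (by simpa using DFunLike.congr_fun h i : r i * d i = r i * d' i).symm
  · rw [finsum_eq_zero_of_forall_eq_zero fun d => ?_]
    · refine if_neg fun hdvd => he ⟨Finsupp.equivFunOnFinite.symm fun i => e i / r i, ?_⟩
      ext i
      simp [Nat.mul_div_cancel' (hdvd i)]
    · rw [if_neg fun h => he ⟨d, h⟩, smul_zero]

theorem isAlgebraic_mvPowSubst (hr : ∀ i, 0 < r i) {φ : MvPowerSeries (Fin n) R}
    (hφ : IsAlgebraic (MvPolynomial (Fin n) R) φ) :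
    IsAlgebraic (MvPolynomial (Fin n) R) (mvPowSubst r φ) := by
  let f : MvPolynomial (Fin n) R →+* MvPolynomial (Fin n) R :=
    (MvPolynomial.aeval fun i => MvPolynomial.X i ^ r i :
      MvPolynomial (Fin n) R →ₐ[R] MvPolynomial (Fin n) R).toRingHom
  let g := substAlgHom (R := R) (hasSubst_X_pow (R := R) hr)
  have hcomm : (algebraMap _ (MvPowerSeries (Fin n) R)).comp f =
      (g : MvPowerSeries (Fin n) R →+* MvPowerSeries (Fin n) R).comp (algebraMap _ _) := by
    rw [algebraMap_mvPolynomial]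
    refine MvPolynomial.ringHom_ext (fun c => ?_) (fun i => ?_) <;>
      simp [f, g, subst_X (hasSubst_X_pow hr)]
  have hf : Function.Injective f := by
    refine .of_comp (f := algebraMap _ (MvPowerSeries (Fin n) R)) ?_
    rw [← RingHom.coe_comp, hcomm, RingHom.coe_comp]
    refine .comp (fun φ ψ h => mvPowSubst_injective hr ?_) ?_
    · simpa [g, mvPowSubst_eq_subst hr] using h
    · rw [algebraMap_mvPolynomial]
      exact MvPolynomial.coe_injective _ _
  rw [mvPowSubst_eq_subst hr, ← coe_substAlgHom (hasSubst_X_pow hr)]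
  exact hφ.ringHom_of_comp_eq f g hf hcomm

end PowerSubstitution

theorem isAlgebraicMvPowerSeries_iff {K : Type*} [CommRing K] {n : ℕ}
    {φ : MvPowerSeries (Fin n) K} :
    IsAlgebraicMvPowerSeries φ ↔ IsAlgebraic (MvPolynomial (Fin n) K) φ := by
  simp only [IsAlgebraicMvPowerSeries, IsAlgebraic, Polynomial.aeval_def,
    MvPowerSeries.algebraMap_mvPolynomial]

/-- The ring of algebraic power series is a Henselian local ring, closed under power
substitutions `Xᵢ ↦ Xᵢ^{rᵢ}` and under division by a coordinate. -/
theorem algebraic_power_series_henselian_local_closed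
    {K : Type*} [Field K] {n : ℕ}
    (A : Subring (MvPowerSeries (Fin n) K))
    (hA : ∀ φ, φ ∈ A ↔ IsAlgebraicMvPowerSeries φ) :
    HenselianLocalRing ↥A ∧
    (∀ φ ∈ A, ∀ r : Fin n → ℕ, (∀ i, 0 < r i) → mvPowSubst r φ ∈ A) ∧
    (∀ φ ∈ A, ∀ (i : Fin n) (ψ : MvPowerSeries (Fin n) K),
      φ = MvPowerSeries.X i * ψ → ψ ∈ A) := by
  obtain rfl : A = (Subalgebra.algebraicClosure (MvPolynomial (Fin n) K)
      (MvPowerSeries (Fin n) K)).toSubring :=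
    Subring.ext fun φ => (hA φ).trans isAlgebraicMvPowerSeries_iff
  refine ⟨Subalgebra.henselianLocalRing_algebraicClosure _ _,
    fun φ hφ r hr => isAlgebraic_mvPowSubst hr hφ, fun φ hφ i ψ hψ => ?_⟩
  refine IsAlgebraic.of_smul (mem_nonZeroDivisors_of_ne_zero (MvPolynomial.X_ne_zero i)) ?_
  rwa [Algebra.smul_def, MvPowerSeries.algebraMap_mvPolynomial,
    MvPolynomial.coeToMvPowerSeries.ringHom_apply, MvPolynomial.coe_X, ← hψ]
end

section
/- Let K be a Henselian valued field of equicharacteristic zero and K̄ its algebraic closure, equipped with an extension of the valuation. Then K is a closed subset of K̄ in the valuation topology. -/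
/-!
Let `x ∈ K̄` lie in the closure of `K` and let `f` be its minimal polynomial over `K`. In
characteristic zero `f' x ≠ 0`, so for `a ∈ K` close enough to `x` the value `f a` is small
compared with `f' a` and the other Taylor coefficients of `f` at `a`: with `c = f a / f' a`,
the polynomial `f (a + c Y) / f a` is `1 + Y` plus terms whose coefficients have valuation `< 1`.
Its reverse is monic over the valuation ring and has `-1` as a simple root modulo the maximal
ideal, so Hensel's lemma yields a root of `f` in `K`. As `f` is irreducible, it is linear and
`x ∈ K`.
-/

open Polynomial IsLocalRing

theorem HenselianLocalRing.exists_isRoot_of_map_residue_eq_X_add_one {R : Type*} [CommRing R]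
    [HenselianLocalRing R] {q : R[X]} (h0 : q.coeff 0 = 1) (hq : q.map (residue R) = X + 1) :
    ∃ u, q.IsRoot u := by
  have hN : 1 ≤ q.natDegree := by
    have := natDegree_map_le (f := residue R) (p := q)
    rwa [hq, ← C_1, natDegree_X_add_C] at this
  have hmonic : q.reverse.Monic := by
    rw [Monic, reverse_leadingCoeff, trailingCoeff_eq_coeff_zero (by simp [h0]), h0]
  have hbar : q.reverse.map (residue R) = X ^ (q.natDegree - 1) * (X + 1) := by
    rw [reverse, ← reflect_map, hq, reflect_add, reflect_one]
    nth_rewrite 1 [← pow_one X]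
    rw [reflect_monomial, revAt_le hN, mul_add, mul_one, ← pow_succ, Nat.sub_add_cancel hN,
      add_comm]
  have hensel := ((HenselianLocalRing.TFAE R).out 0 1).mp ‹HenselianLocalRing R›
  obtain ⟨w, hw, hw_res⟩ := hensel q.reverse hmonic (-1)
    (by simp [aeval_def, ← eval_map, hbar])
    (by simp [aeval_def, ← eval_map, ← derivative_map, hbar, derivative_mul])
  have hw_unit : IsUnit w := (residue_ne_zero_iff_isUnit w).mp (by simp [hw_res])
  let _ : Invertible (hw_unit.unit⁻¹ : Rˣ).val := Units.invertible _
  refine ⟨(hw_unit.unit⁻¹ : Rˣ), ?_⟩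
  rw [IsRoot, eval, ← eval₂_reverse_eq_zero_iff]
  simpa using hw

theorem Valuation.exists_isRoot_of_valuation_coeff_lt_one {K Γ₀ : Type*} [Field K]
    [LinearOrderedCommGroupWithZero Γ₀] {v : Valuation K Γ₀}
    [HenselianLocalRing v.valuationSubring] {p : K[X]} (h0 : p.coeff 0 = 1) (h1 : p.coeff 1 = 1)
    (h : ∀ i, 2 ≤ i → v (p.coeff i) < 1) : ∃ y, p.IsRoot y := by
  have hcoeff_le i : v (p.coeff i) ≤ 1 := by
    rcases i with _ | _ | i
    · simp [h0]
    · simp [h1]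
    · exact (h _ (by omega)).le
  obtain ⟨q, rfl⟩ : p ∈ lifts v.valuationSubring.subtype :=
    (lifts_iff_coeff_lifts p).mpr fun i => ⟨⟨_, hcoeff_le i⟩, rfl⟩
  simp only [coe_mapRingHom, coeff_map] at h0 h1 h
  replace h0 : q.coeff 0 = 1 := Subtype.ext h0
  replace h1 : q.coeff 1 = 1 := Subtype.ext h1
  have hq : q.map (residue _) = X + 1 := by
    ext (_ | _ | i)
    · simp [h0]
    · simp [h1, coeff_one]
    · simpa [coeff_X, coeff_one, ← Valuation.mem_maximalIdeal_iff] using h (i + 2) (by omega)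
  obtain ⟨u, hu⟩ := HenselianLocalRing.exists_isRoot_of_map_residue_eq_X_add_one h0 hq
  exact ⟨u, hu.map⟩

/-- If `f a ≠ 0` and `c = f a / f' a`, the coefficients of `f (a + c * Y) / f a` are
`1, 1, newtonCoeff f a 2, newtonCoeff f a 3, …`. -/
noncomputable def newtonCoeff {F : Type*} [Field F] (f : F[X]) (a : F) (i : ℕ) : F :=
  (taylor a f).coeff i * f.eval a ^ (i - 1) / f.derivative.eval a ^ i

theorem newtonCoeff_map {F E : Type*} [Field F] [Field E] (φ : F →+* E) (f : F[X]) (a : F)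
    (i : ℕ) : newtonCoeff (f.map φ) (φ a) i = φ (newtonCoeff f a i) := by
  simp [newtonCoeff, ← map_taylor, derivative_map, eval_map_apply]

theorem Valuation.exists_isRoot_of_valuation_newtonCoeff_lt_one {K Γ₀ : Type*} [Field K]
    [LinearOrderedCommGroupWithZero Γ₀] {v : Valuation K Γ₀}
    [HenselianLocalRing v.valuationSubring] {f : K[X]} {a : K} (hf' : f.derivative.eval a ≠ 0)
    (h : ∀ i, 2 ≤ i → v (newtonCoeff f a i) < 1) : ∃ b, f.IsRoot b := by
  by_cases hf : f.eval a = 0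
  · exact ⟨a, hf⟩
  set c := f.eval a / f.derivative.eval a
  set p := C (f.eval a)⁻¹ * (taylor a f).comp (C c * X)
  have hp i (hi : 1 ≤ i) : p.coeff i = newtonCoeff f a i := by
    obtain ⟨j, rfl⟩ := Nat.exists_eq_add_of_le' hi
    simp only [p, c, newtonCoeff, coeff_C_mul, comp_C_mul_X_coeff, pow_succ, div_pow,
      add_tsub_cancel_right]
    field_simp
  obtain ⟨y, hy⟩ := v.exists_isRoot_of_valuation_coeff_lt_one (p := p)
    (by simp [p, hf]) (by simp [hp 1 le_rfl, newtonCoeff, hf'])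
    (fun i hi => hp i (by omega) ▸ h i hi)
  refine ⟨c * y + a, ?_⟩
  simpa [p, IsRoot, hf, taylor_eval] using hy

open Filter Topology in
theorem Valued.eventually_valuation_newtonCoeff_lt_one {L Γ : Type*} [Field L]
    [LinearOrderedCommGroupWithZero Γ] [Valued L Γ] {g : L[X]} {x : L} (hx : g.IsRoot x)
    (hg' : g.derivative.eval x ≠ 0) :
    ∀ᶠ y in 𝓝 x, g.derivative.eval y ≠ 0 ∧ ∀ i, 2 ≤ i → Valued.v (newtonCoeff g y i) < 1 := by
  have hball : {z : L | Valued.v z < 1} ∈ 𝓝 0 := by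
    simpa [Valuation.restrict_lt_one_iff] using (Valued.isOpen_ball L 1).mem_nhds (by simp)
  have htendsto i (hi : 2 ≤ i) : Tendsto (newtonCoeff g · i) (𝓝 x) (𝓝 0) := by
    have hcont : ContinuousAt
        (fun y => (hasseDeriv i g).eval y * g.eval y ^ (i - 1) / g.derivative.eval y ^ i) x :=
      ((hasseDeriv i g).continuousAt.mul (g.continuousAt.pow _)).div
        (g.derivative.continuousAt.pow _) (pow_ne_zero i hg')
    simpa [newtonCoeff, taylor_coeff, hx.eq_zero, show i - 1 ≠ 0 by omega] using hcont.tendsto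
  have hsmall : ∀ᶠ y in 𝓝 x, ∀ i ∈ Finset.Icc 2 g.natDegree, Valued.v (newtonCoeff g y i) < 1 :=
    (eventually_all_finset _).mpr fun i hi => htendsto i (Finset.mem_Icc.mp hi).1 hball
  filter_upwards [g.derivative.continuousAt.eventually_ne hg', hsmall] with y hy' hy
  refine ⟨hy', fun i hi => ?_⟩
  by_cases hig : i ≤ g.natDegree
  · exact hy i (Finset.mem_Icc.mpr ⟨hi, hig⟩)
  · simp [newtonCoeff, coeff_eq_zero_of_natDegree_lt (natDegree_taylor g y ▸ not_le.mp hig)]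

theorem henselian_valued_field_closed_in_algebraic_closure_general
    {K : Type*} [Field K] {Γ₀ Γ₀' : Type*}
    [LinearOrderedCommGroupWithZero Γ₀] [LinearOrderedCommGroupWithZero Γ₀']
    [Valued K Γ₀]
    [HenselianLocalRing ↥((Valued.v : Valuation K Γ₀).valuationSubring)]
    [CharZero K]
    [Valued (AlgebraicClosure K) Γ₀']
    (ι : Γ₀ →*₀ Γ₀') (hι : StrictMono ι)
    (hext : ∀ x : K,
      Valued.v (algebraMap K (AlgebraicClosure K) x) = ι (Valued.v x)) :
    IsClosed (Set.range (algebraMap K (AlgebraicClosure K))) := by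
  refine isClosed_of_closure_subset fun x hx => ?_
  set φ := algebraMap K (AlgebraicClosure K)
  set f := minpoly K x
  have hroot : (f.map φ).IsRoot x := by simp [f, φ, IsRoot, eval_map_algebraMap]
  have hsep : (f.map φ).derivative.eval x ≠ 0 := by
    simpa [f, φ, derivative_map, eval_map_algebraMap] using
      (Algebra.IsSeparable.isSeparable K x).aeval_derivative_ne_zero (minpoly.aeval K x)
  obtain ⟨_, ⟨a, rfl⟩, hderiv, hsmall⟩ := ((mem_closure_iff_frequently.mp hx).and_eventually
    (Valued.eventually_valuation_newtonCoeff_lt_one hroot hsep)).exists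
  obtain ⟨b, hb⟩ := (Valued.v : Valuation K Γ₀).exists_isRoot_of_valuation_newtonCoeff_lt_one
    (f := f) (a := a) (by simpa [derivative_map, eval_map_apply] using hderiv)
    fun i hi => hι.lt_iff_lt.mp (by simpa [← hext, newtonCoeff_map] using hsmall i hi)
  have hf_irred := minpoly.irreducible (Algebra.IsIntegral.isIntegral (R := K) x)
  exact minpoly.degree_eq_one_iff.mp (degree_eq_one_of_irreducible_of_root hf_irred hb)

/-- A Henselian valued field `K` of equicharacteristic zero is a closed subset of its
algebraic closure `K̄`, equipped with an extension of the valuation, in the valuation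
topology. -/
theorem henselian_valued_field_closed_in_algebraic_closure
    {K : Type*} [Field K] {Γ₀ Γ₀' : Type*}
    [LinearOrderedCommGroupWithZero Γ₀] [LinearOrderedCommGroupWithZero Γ₀']
    [Valued K Γ₀]
    [HenselianLocalRing ↥((Valued.v : Valuation K Γ₀).valuationSubring)]
    [CharZero K]
    [CharZero (IsLocalRing.ResidueField ↥((Valued.v : Valuation K Γ₀).valuationSubring))]
    [Valued (AlgebraicClosure K) Γ₀']
    (ι : Γ₀ →*₀ Γ₀') (hι : StrictMono ι)
    (hext : ∀ x : K,
      Valued.v (algebraMap K (AlgebraicClosure K) x) = ι (Valued.v x)) :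
    IsClosed (Set.range (algebraMap K (AlgebraicClosure K))) :=
  henselian_valued_field_closed_in_algebraic_closure_general ι hι hext
end
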